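/- arXiv:1703.06299 — 7 statements merged into one kernel-verified Lean document; each statement's English description precedes it below -/
import Mathlib

section
/- Let X be a real Banach space possessing a C^q K-map (q ∈ {0,1,2,...,∞}). Then for every Banach space Y and every map f that is defined and C^q on some open neighborhood of 0 in X with values in Y, there exists a map F : X → Y that is C^q on all of X and coincides with f on some (possibly smaller) neighborhood of 0. -/
open Filter Metric

/-- A `C^q` K-map on a real Banach space `X`: a `C^q` map `H : X → X` coinciding with the
identity on a neighborhood of `0` and bounded on all of `X`. -/
def IsKMap {X : Type*} [NormedAddCommGroup X] [NormedSpace ℝ X]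
    (q : ℕ∞) (H : X → X) : Prop :=
  ContDiff ℝ q H ∧ (∀ᶠ x in nhds (0 : X), H x = x) ∧ ∃ C : ℝ, ∀ x, ‖H x‖ ≤ C

/-- If a real Banach space `X` possesses a `C^q` K-map, then every map `f` that is `C^q`
on an open neighborhood of `0` with values in a Banach space `Y` has a global `C^q`
representative `F : X → Y` agreeing with `f` near `0`. -/
theorem extension_of_local_smooth_map
    {X : Type*} [NormedAddCommGroup X] [NormedSpace ℝ X] [CompleteSpace X]
    (q : ℕ∞) (H : X → X) (hH : IsKMap q H)
    {Y : Type*} [NormedAddCommGroup Y] [NormedSpace ℝ Y] [CompleteSpace Y]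
    (f : X → Y) (U : Set X) (hUopen : IsOpen U) (hU0 : (0 : X) ∈ U)
    (hf : ContDiffOn ℝ q f U) :
    ∃ F : X → Y, ContDiff ℝ q F ∧ ∀ᶠ x in nhds (0 : X), F x = f x := by
  obtain ⟨hHsmooth, hHid, C, hC⟩ := hH
  obtain ⟨δ, hδ, hball⟩ := Metric.isOpen_iff.1 hUopen 0 hU0
  set C' : ℝ := max C 1 with hC'
  have hC'pos : 0 < C' := lt_of_lt_of_le one_pos (le_max_right _ _)
  have hC'bound : ∀ x, ‖H x‖ ≤ C' := fun x => (hC x).trans (le_max_left _ _)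
  set c : ℝ := δ / (2 * C') with hc
  have hcpos : 0 < c := div_pos hδ (by positivity)
  set G : X → X := fun x => c • H (c⁻¹ • x) with hG
  have hGsmooth : ContDiff ℝ q G := by
    exact (contDiff_const_smul c).comp (hHsmooth.comp (contDiff_const_smul c⁻¹))
  have hGmem : ∀ x, G x ∈ U := by
    intro x
    apply hball
    simp only [hG, mem_ball_zero_iff, norm_smul, Real.norm_eq_abs,
      abs_of_pos hcpos]
    calc c * ‖H (c⁻¹ • x)‖ ≤ c * C' := by
          exact mul_le_mul_of_nonneg_left (hC'bound _) hcpos.le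
      _ < δ := by
          have h2 : c * C' = δ / 2 := by
            rw [hc]; field_simp
          rw [h2]; linarith
  refine ⟨f ∘ G, hf.comp_contDiff hGsmooth hGmem, ?_⟩
  have h1 : ∀ᶠ x in nhds (0 : X), H (c⁻¹ • x) = c⁻¹ • x := by
    have hcont : Continuous fun x : X => c⁻¹ • x := continuous_const_smul _
    have : Tendsto (fun x : X => c⁻¹ • x) (nhds 0) (nhds 0) := by
      simpa using hcont.tendsto 0
    exact this.eventually hHid
  filter_upwards [h1] with x hx
  simp [Function.comp, hG, hx, smul_smul, mul_inv_cancel₀ (ne_of_gt hcpos)]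
end

section
/- Let X be a real Banach space possessing a C^∞ K-map H all of whose iterated Fréchet derivatives are bounded on X (i.e. for every n, sup_{x ∈ X} ‖D^n H(x)‖ < ∞). Let Y be a Banach space and let f be a C^∞ map defined on an open ball around 0 in X with values in Y such that f and all its iterated derivatives are bounded on that ball. Then there exists a C^∞ map F : X → Y, coinciding with f on a neighborhood of 0, such that F and all its iterated Fréchet derivatives are bounded on all of X. -/
open Filter Metric
open scoped ContDiff

/-!
Rescaling the K-map, `G x = ε • H (ε⁻¹ • x)`, gives a smooth map that is still the identity near
`0`, still has bounded derivatives of every order, and takes values in `ball 0 R` once `ε` is small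
compared with `R / sup ‖H‖`. Then `F = f ∘ G` extends the germ of `f` at `0`, and the Faà di Bruno
bound on the derivatives of a composition shows that `F` has bounded derivatives.
-/

theorem eventually_atTop_forall_le_of_forall_exists_le {α : Type*} {u : ℕ → α → ℝ} {n : ℕ}
    (h : ∀ i ≤ n, ∃ C, ∀ a, u i a ≤ C) : ∀ᶠ C in atTop, ∀ i ≤ n, ∀ a, u i a ≤ C := by
  refine (eventually_all_finite (Set.finite_Iic n)).2 fun i hi => ?_
  obtain ⟨C, hC⟩ := h i hi
  filter_upwards [eventually_ge_atTop C] with C' hC' a using (hC a).trans hC'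

section

variable {𝕜 E F G : Type*} [NontriviallyNormedField 𝕜]
  [NormedAddCommGroup E] [NormedSpace 𝕜 E] [NormedAddCommGroup F] [NormedSpace 𝕜 F]
  [NormedAddCommGroup G] [NormedSpace 𝕜 G]

theorem norm_iteratedFDeriv_smul_comp_inv_smul {H : E → F} {n : ℕ} (hH : ContDiff 𝕜 n H)
    (c : 𝕜) (x : E) :
    ‖iteratedFDeriv 𝕜 n (fun y => c • H (c⁻¹ • y)) x‖ =
      ‖c‖ * ‖c⁻¹‖ ^ n * ‖iteratedFDeriv 𝕜 n H (c⁻¹ • x)‖ := by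
  have hHc : ContDiff 𝕜 n (fun y => H (c⁻¹ • y)) := hH.comp (contDiff_const_smul _)
  rw [iteratedFDeriv_const_smul_apply' hHc.contDiffAt, iteratedFDeriv_comp_const_smul _ hH,
    norm_smul, norm_smul, norm_pow, mul_assoc]

theorem exists_bound_iteratedFDeriv_comp {N : WithTop ℕ∞} {n : ℕ} {g : F → G} {f : E → F}
    {t : Set F} (ht : UniqueDiffOn 𝕜 t) (hft : ∀ x, f x ∈ t) (hg : ContDiffOn 𝕜 N g t)
    (hf : ContDiff 𝕜 N f) (hn : n ≤ N)
    (hgb : ∀ i ≤ n, ∃ C, ∀ y ∈ t, ‖iteratedFDerivWithin 𝕜 i g t y‖ ≤ C)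
    (hfb : ∀ i ≤ n, ∃ C, ∀ x, ‖iteratedFDeriv 𝕜 i f x‖ ≤ C) :
    ∃ C, ∀ x, ‖iteratedFDeriv 𝕜 n (g ∘ f) x‖ ≤ C := by
  have hgb' : ∀ i ≤ n, ∃ C, ∀ x, ‖iteratedFDerivWithin 𝕜 i g t (f x)‖ ≤ C := fun i hi =>
    (hgb i hi).imp fun C hC x => hC (f x) (hft x)
  obtain ⟨C, hC⟩ := (eventually_atTop_forall_le_of_forall_exists_le hgb').exists
  obtain ⟨D, hD, hD1⟩ :=
    ((eventually_atTop_forall_le_of_forall_exists_le hfb).and (eventually_ge_atTop 1)).exists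
  refine ⟨n.factorial * C * D ^ n, fun x => ?_⟩
  refine norm_iteratedFDeriv_comp_le' (Set.range_subset_iff.2 hft) ht hg hf hn x
    (fun i hi => hC i hi x) fun i hi1 hin => ?_
  exact (hD i hin x).trans (le_self_pow₀ hD1 (by omega))

end

theorem exists_contDiff_eventually_eq_id_mem_ball
    {X : Type*} [NormedAddCommGroup X] [NormedSpace ℝ X]
    {H : X → X} (hH : ContDiff ℝ ∞ H) (hHid : ∀ᶠ x in nhds (0 : X), H x = x)
    (hHbdd : ∃ C : ℝ, ∀ x, ‖H x‖ ≤ C)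
    (hHder : ∀ n : ℕ, ∃ C : ℝ, ∀ x, ‖iteratedFDeriv ℝ n H x‖ ≤ C) {r : ℝ} (hr : 0 < r) :
    ∃ G : X → X, ContDiff ℝ ∞ G ∧ (∀ᶠ x in nhds (0 : X), G x = x) ∧ (∀ x, G x ∈ ball 0 r) ∧
      ∀ n : ℕ, ∃ C : ℝ, ∀ x, ‖iteratedFDeriv ℝ n G x‖ ≤ C := by
  obtain ⟨C₀, hC₀⟩ := hHbdd
  have hC₀0 : 0 ≤ C₀ := (norm_nonneg _).trans (hC₀ 0)
  set ε := r / (C₀ + 1)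
  have hε : 0 < ε := by positivity
  refine ⟨fun x => ε • H (ε⁻¹ • x), by fun_prop, ?_, fun x => ?_, fun n => ?_⟩
  · have h0 : Tendsto (ε⁻¹ • · : X → X) (nhds 0) (nhds 0) :=
      (continuous_const_smul ε⁻¹).tendsto' 0 0 (smul_zero _)
    filter_upwards [h0.eventually hHid] with x hx
    rw [hx, smul_inv_smul₀ hε.ne']
  · rw [mem_ball_zero_iff, norm_smul, Real.norm_of_nonneg hε.le]
    calc ε * ‖H (ε⁻¹ • x)‖ ≤ ε * C₀ := by gcongr; exact hC₀ _
      _ < r := by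
        rw [div_mul_eq_mul_div, div_lt_iff₀ (by positivity)]
        nlinarith
  · obtain ⟨C, hC⟩ := hHder n
    refine ⟨‖ε‖ * ‖ε⁻¹‖ ^ n * C, fun x => ?_⟩
    rw [norm_iteratedFDeriv_smul_comp_inv_smul (hH.of_le (by exact_mod_cast le_top))]
    gcongr
    exact hC _

theorem extension_of_local_smooth_map_bounded_general
    {X : Type*} [NormedAddCommGroup X] [NormedSpace ℝ X]
    (H : X → X) (hH : ContDiff ℝ (⊤ : ℕ∞) H)
    (hHid : ∀ᶠ x in nhds (0 : X), H x = x)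
    (hHbdd : ∃ C : ℝ, ∀ x, ‖H x‖ ≤ C)
    (hHder : ∀ n : ℕ, ∃ C : ℝ, ∀ x, ‖iteratedFDeriv ℝ n H x‖ ≤ C)
    {Y : Type*} [NormedAddCommGroup Y] [NormedSpace ℝ Y]
    (f : X → Y) (R : ℝ) (hR : 0 < R)
    (hf : ContDiffOn ℝ (⊤ : ℕ∞) f (ball (0 : X) R))
    (hfbdd : ∀ n : ℕ, ∃ C : ℝ, ∀ x ∈ ball (0 : X) R,
      ‖iteratedFDerivWithin ℝ n f (ball (0 : X) R) x‖ ≤ C) :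
    ∃ F : X → Y, ContDiff ℝ (⊤ : ℕ∞) F ∧ (∀ᶠ x in nhds (0 : X), F x = f x) ∧
      ∀ n : ℕ, ∃ C : ℝ, ∀ x, ‖iteratedFDeriv ℝ n F x‖ ≤ C := by
  obtain ⟨G, hG, hGid, hGball, hGder⟩ :=
    exists_contDiff_eventually_eq_id_mem_ball hH hHid hHbdd hHder hR
  refine ⟨f ∘ G, hf.comp_contDiff hG hGball, ?_, fun n => ?_⟩
  · filter_upwards [hGid] with x hx
    rw [Function.comp_apply, hx]
  · exact exists_bound_iteratedFDeriv_comp isOpen_ball.uniqueDiffOn hGball hf hG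
      (by exact_mod_cast le_top) (fun i _ => hfbdd i) fun i _ => hGder i

/-- If a real Banach space `X` possesses a `C^∞` K-map `H` all of whose iterated Fréchet
derivatives are bounded on `X`, and `f` is a `C^∞` map on an open ball around `0` with
values in a Banach space `Y` which is bounded together with all its iterated derivatives
on that ball, then there is a global `C^∞` map `F : X → Y` agreeing with `f` near `0`
which is bounded on `X` together with all its iterated Fréchet derivatives. -/
theorem extension_of_local_smooth_map_bounded
    {X : Type*} [NormedAddCommGroup X] [NormedSpace ℝ X] [CompleteSpace X]
    (H : X → X) (hH : ContDiff ℝ (⊤ : ℕ∞) H)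
    (hHid : ∀ᶠ x in nhds (0 : X), H x = x)
    (hHbdd : ∃ C : ℝ, ∀ x, ‖H x‖ ≤ C)
    (hHder : ∀ n : ℕ, ∃ C : ℝ, ∀ x, ‖iteratedFDeriv ℝ n H x‖ ≤ C)
    {Y : Type*} [NormedAddCommGroup Y] [NormedSpace ℝ Y] [CompleteSpace Y]
    (f : X → Y) (R : ℝ) (hR : 0 < R)
    (hf : ContDiffOn ℝ (⊤ : ℕ∞) f (ball (0 : X) R))
    (hfbdd : ∀ n : ℕ, ∃ C : ℝ, ∀ x ∈ ball (0 : X) R,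
      ‖iteratedFDerivWithin ℝ n f (ball (0 : X) R) x‖ ≤ C) :
    ∃ F : X → Y, ContDiff ℝ (⊤ : ℕ∞) F ∧ (∀ᶠ x in nhds (0 : X), F x = f x) ∧
      ∀ n : ℕ, ∃ C : ℝ, ∀ x, ‖iteratedFDeriv ℝ n F x‖ ≤ C :=
  extension_of_local_smooth_map_bounded_general H hH hHid hHbdd hHder f R hR hf hfbdd
end

section
/- Let p = 2n be an even positive integer and let X = ℓ_p be the real Banach space of p-summable sequences with its usual norm. Then X admits a C^∞ bump function at 0: there exists a C^∞ function δ : ℓ_p → ℝ equal to 1 on a neighborhood of 0 and vanishing outside a bounded set; one may take δ(x) = τ(‖x‖^p) = τ(Σ_k x_k^{2n}) where τ : ℝ → ℝ is a C^∞ bump function on the real line. -/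
/-!
For even `p`, `‖x‖ ^ p = ∑' k, x k ^ p` on `ℓ_p` is the diagonal `x ↦ T (x, …, x)` of the
`p`-linear form `T x = ∑' k, ∏ i, x i k`. Since `|∏ i, a i| ≤ ∑ i, |a i| ^ p`, this form is
bounded by `p` on unit vectors, hence continuous, so `‖x‖ ^ p` is analytic. Composing it with a
smooth bump `τ` on `ℝ` gives the bump function `δ x = τ (‖x‖ ^ p)`.
-/

open Filter
open scoped ContDiff

lemma abs_prod_le_sum_abs_pow {m : ℕ} (hm : 0 < m) (a : Fin m → ℝ) :
    |∏ i, a i| ≤ ∑ i, |a i| ^ m := by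
  have : Nonempty (Fin m) := ⟨⟨0, hm⟩⟩
  obtain ⟨j, -, hj⟩ := Finset.univ.exists_max_image (fun i => |a i|) Finset.univ_nonempty
  calc |∏ i, a i| = ∏ i, |a i| := Finset.abs_prod _ _
    _ ≤ ∏ _i : Fin m, |a j| := Finset.prod_le_prod (fun i _ => abs_nonneg _) hj
    _ = |a j| ^ m := by simp
    _ ≤ ∑ i, |a i| ^ m :=
        Finset.single_le_sum (f := fun i => |a i| ^ m) (fun i _ => by positivity)
          (Finset.mem_univ j)

lemma MultilinearMap.norm_map_le_of_forall_norm_eq_one {ι : Type*} [Fintype ι]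
    {E : ι → Type*} [∀ i, NormedAddCommGroup (E i)] [∀ i, NormedSpace ℝ (E i)]
    {G : Type*} [NormedAddCommGroup G] [NormedSpace ℝ G] (f : MultilinearMap ℝ E G) {C : ℝ}
    (hC : 0 ≤ C) (hf : ∀ u, (∀ i, ‖u i‖ = 1) → ‖f u‖ ≤ C) (x : ∀ i, E i) :
    ‖f x‖ ≤ C * ∏ i, ‖x i‖ := by
  by_cases hx : ∀ i, x i ≠ 0
  · have hx' : ∀ i, ‖x i‖ ≠ 0 := fun i => norm_ne_zero_iff.mpr (hx i)
    have hxu : x = fun i => ‖x i‖ • (‖x i‖⁻¹ • x i) := by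
      funext i; rw [smul_smul, mul_inv_cancel₀ (hx' i), one_smul]
    calc ‖f x‖ = (∏ i, ‖x i‖) * ‖f fun i => ‖x i‖⁻¹ • x i‖ := by
          conv_lhs => rw [hxu, f.map_smul_univ, norm_smul]
          rw [Real.norm_of_nonneg (by positivity)]
      _ ≤ C * ∏ i, ‖x i‖ := by
          rw [mul_comm]
          gcongr
          exact hf _ fun i => by rw [norm_smul, norm_inv, norm_norm, inv_mul_cancel₀ (hx' i)]
  · push Not at hx
    obtain ⟨i, hi⟩ := hx
    rw [f.map_coord_zero i hi, norm_zero]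
    positivity

lemma Nat.pos_of_fact_one_le_cast (m : ℕ) [h : Fact (1 ≤ (m : ENNReal))] : 0 < m := by
  exact_mod_cast h.out

namespace lp

noncomputable section

variable {ι : Type*} {m : ℕ}

local notation "ℓ" => lp (fun _ : ι => ℝ) m

def coordProd (k : ι) : MultilinearMap ℝ (fun _ : Fin m => ℓ) ℝ :=
  (MultilinearMap.mkPiAlgebra ℝ (Fin m) ℝ).compLinearMap fun _ => lp.evalₗ _ _ k

@[simp]
lemma coordProd_apply (k : ι) (x : Fin m → ℓ) : coordProd k x = ∏ i, x i k := by
  simp [coordProd]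

variable [Fact (1 ≤ (m : ENNReal))]

lemma summable_abs_pow (x : ℓ) : Summable fun k => |x k| ^ m := by
  have hm : 0 < m := Nat.pos_of_fact_one_le_cast m
  simpa [Real.rpow_natCast] using (lp.memℓp x).summable (by simpa using hm)

lemma tsum_abs_pow (x : ℓ) : ∑' k, |x k| ^ m = ‖x‖ ^ m := by
  have hm : 0 < m := Nat.pos_of_fact_one_le_cast m
  simpa [Real.rpow_natCast] using (lp.norm_rpow_eq_tsum (by simpa using hm) x).symm

lemma summable_prod (x : Fin m → ℓ) : Summable fun k => ∏ i, x i k := by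
  refine .of_norm_bounded (g := fun k => ∑ i, |x i k| ^ m)
    (summable_sum fun i _ => summable_abs_pow (x i)) fun k => ?_
  exact abs_prod_le_sum_abs_pow (Nat.pos_of_fact_one_le_cast m) _

lemma abs_tsum_prod_le (x : Fin m → ℓ) : |∑' k, ∏ i, x i k| ≤ ∑ i, ‖x i‖ ^ m := by
  have hsum (i : Fin m) := summable_abs_pow (x i)
  calc |∑' k, ∏ i, x i k| ≤ ∑' k, |∏ i, x i k| := by
        simpa only [Real.norm_eq_abs] using norm_tsum_le_tsum_norm (summable_prod x).norm
    _ ≤ ∑' k, ∑ i, |x i k| ^ m :=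
        (summable_prod x).abs.tsum_le_tsum (fun k => abs_prod_le_sum_abs_pow
          (Nat.pos_of_fact_one_le_cast m) _) (summable_sum fun i _ => hsum i)
    _ = ∑ i, ‖x i‖ ^ m := by
        rw [Summable.tsum_finsetSum fun i _ => hsum i]
        simp only [tsum_abs_pow]

def tsumProdMultilinear : MultilinearMap ℝ (fun _ : Fin m => ℓ) ℝ where
  toFun x := ∑' k, coordProd k x
  map_update_add' x i a b := by
    simp only [MultilinearMap.map_update_add, coordProd_apply]
    exact (summable_prod _).tsum_add (summable_prod _)
  map_update_smul' x i c a := by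
    simp only [MultilinearMap.map_update_smul, coordProd_apply, smul_eq_mul]
    exact tsum_mul_left

def tsumProd : ContinuousMultilinearMap ℝ (fun _ : Fin m => ℓ) ℝ :=
  (tsumProdMultilinear (ι := ι) (m := m)).mkContinuous m <|
    MultilinearMap.norm_map_le_of_forall_norm_eq_one _ (Nat.cast_nonneg m) fun u hu => by
      simpa [tsumProdMultilinear, hu] using abs_tsum_prod_le u

@[simp]
lemma tsumProd_apply (x : Fin m → ℓ) : tsumProd x = ∑' k, ∏ i, x i k := by
  simp [tsumProd, tsumProdMultilinear]

lemma contDiff_tsum_pow : ContDiff ℝ ω fun x : ℓ => ∑' k, x k ^ m := by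
  have h : (fun x : ℓ => ∑' k, x k ^ m) = fun x => tsumProd fun _ => x := by
    ext x; simp
  rw [h]
  exact (tsumProd (ι := ι) (m := m)).contDiff.comp (contDiff_pi.mpr fun _ => contDiff_id)

lemma tsum_pow_eq_norm_pow (hm : Even m) (x : ℓ) : ∑' k, x k ^ m = ‖x‖ ^ m := by
  simp only [← tsum_abs_pow, hm.pow_abs]

end

end lp

theorem lp_even_has_smooth_bump_general
    (n : ℕ) [Fact (1 ≤ ((2 * n : ℕ) : ENNReal))] :
    ∃ τ : ℝ → ℝ, ContDiff ℝ (⊤ : ℕ∞) τ ∧ (∀ᶠ s in nhds (0 : ℝ), τ s = 1) ∧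
      (∃ r : ℝ, ∀ s : ℝ, r ≤ |s| → τ s = 0) ∧
      ∃ δ : lp (fun _ : ℕ => ℝ) ((2 * n : ℕ) : ENNReal) → ℝ,
        (∀ x, δ x = τ (‖x‖ ^ (2 * n))) ∧
        ContDiff ℝ (⊤ : ℕ∞) δ ∧
        (∀ᶠ x in nhds (0 : lp (fun _ : ℕ => ℝ) ((2 * n : ℕ) : ENNReal)), δ x = 1) ∧
        ∃ R : ℝ, ∀ x, R ≤ ‖x‖ → δ x = 0 := by
  let τ : ContDiffBump (0 : ℝ) := ⟨1 / 2, 1, by norm_num, by norm_num⟩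
  have hτ_zero (s : ℝ) (hs : 1 ≤ |s|) : τ s = 0 :=
    τ.zero_of_le_dist (by simpa [Real.dist_eq] using hs)
  have hτ_one := τ.eventuallyEq_one
  refine ⟨τ, τ.contDiff, hτ_one, ⟨1, hτ_zero⟩, fun x => τ (‖x‖ ^ (2 * n)), fun _ => rfl,
    ?_, ?_, ⟨1, fun x hx => hτ_zero _ ?_⟩⟩
  · simp_rw [← lp.tsum_pow_eq_norm_pow (even_two_mul n)]
    exact τ.contDiff.comp (lp.contDiff_tsum_pow.of_le le_top)
  · have hcont : Continuous fun x : lp (fun _ : ℕ => ℝ) ((2 * n : ℕ) : ENNReal) =>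
        ‖x‖ ^ (2 * n) := by fun_prop
    have h0 := hcont.tendsto 0
    rw [norm_zero, zero_pow (Nat.pos_of_fact_one_le_cast (2 * n)).ne'] at h0
    exact h0.eventually hτ_one
  · rw [abs_of_nonneg (by positivity)]
    exact one_le_pow₀ hx

/-- For an even positive integer `p = 2n`, the space `ℓ_p` of `p`-summable real sequences
admits a `C^∞` bump function at `0`; one may take `δ x = τ (‖x‖ ^ p)` for a suitable `C^∞`
bump function `τ` on the real line. -/
theorem lp_even_has_smooth_bump
    (n : ℕ) (hn : 0 < n) [Fact (1 ≤ ((2 * n : ℕ) : ENNReal))] :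
    ∃ τ : ℝ → ℝ, ContDiff ℝ (⊤ : ℕ∞) τ ∧ (∀ᶠ s in nhds (0 : ℝ), τ s = 1) ∧
      (∃ r : ℝ, ∀ s : ℝ, r ≤ |s| → τ s = 0) ∧
      ∃ δ : lp (fun _ : ℕ => ℝ) ((2 * n : ℕ) : ENNReal) → ℝ,
        (∀ x, δ x = τ (‖x‖ ^ (2 * n))) ∧
        ContDiff ℝ (⊤ : ℕ∞) δ ∧
        (∀ᶠ x in nhds (0 : lp (fun _ : ℕ => ℝ) ((2 * n : ℕ) : ENNReal)), δ x = 1) ∧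
        ∃ R : ℝ, ∀ x, R ≤ ‖x‖ → δ x = 0 :=
  lp_even_has_smooth_bump_general n
end

section
/- Let M be a compact Hausdorff topological space and let X = C(M, ℝ) be the Banach space of continuous real-valued functions on M with the supremum norm. Let h : ℝ → ℝ be a C^∞ function with bounded support that equals 1 on a neighborhood of 0, with h and all its derivatives bounded. Then the map H : X → X defined by H(x)(t) = h(x(t))·x(t) is a C^∞ K-map on X (it coincides with the identity on a neighborhood of 0 and is bounded), and all of its iterated Fréchet derivatives are bounded on X. -/
/-!
`H` is the superposition operator `x ↦ g ∘ x` of `g s = h s * s`, a smooth function with compact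
support. For any `g` whose derivatives are all bounded, `g'` is Lipschitz, so the Taylor remainder
`g (a + u) - g a - g' a * u` is `O(u²)` uniformly in `a`; hence `x ↦ g ∘ x` is Fréchet
differentiable on `C(M, ℝ)` with derivative `x ↦ (g' ∘ x) * ·`. Since `g'` again has bounded
derivatives, induction on the order gives smoothness and, multiplication having norm `≤ 1`,
bounds the `n`-th derivative of `x ↦ g ∘ x` by `sup |g⁽ⁿ⁾|`.
-/

open Filter Asymptotics Topology NNReal
open scoped ContDiff

def ContDiffBounded (g : ℝ → ℝ) : Prop :=
  ContDiff ℝ ∞ g ∧ ∀ k : ℕ, ∃ C, ∀ s, |iteratedDeriv k g s| ≤ C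

namespace ContDiffBounded

variable {g : ℝ → ℝ}

theorem deriv (hg : ContDiffBounded g) : ContDiffBounded (deriv g) :=
  ⟨hg.1.iterate_deriv 1, fun k => by simpa only [← iteratedDeriv_succ'] using hg.2 (k + 1)⟩

theorem exists_lipschitzWith_deriv (hg : ContDiffBounded g) :
    ∃ K, LipschitzWith K (_root_.deriv g) := by
  obtain ⟨C, hC⟩ := hg.deriv.deriv.2 0
  refine ⟨C.toNNReal, lipschitzWith_of_nnnorm_deriv_le ?_ fun s => ?_⟩
  · exact hg.deriv.1.differentiable (by simp)
  · rw [← NNReal.coe_le_coe, coe_nnnorm, Real.norm_eq_abs, Real.coe_toNNReal',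
      ← iteratedDeriv_zero (f := _root_.deriv _)]
    exact (hC s).trans (le_max_left _ _)

theorem of_hasCompactSupport (hg : ContDiff ℝ ∞ g) (hs : HasCompactSupport g) :
    ContDiffBounded g := by
  refine ⟨hg, fun k => ?_⟩
  have hsk : HasCompactSupport (iteratedDeriv k g) := by
    rw [iteratedDeriv_eq_iterate]
    induction k with
    | zero => exact hs
    | succ k ih => rw [Function.iterate_succ_apply']; exact ih.deriv
  exact hsk.exists_bound_of_continuous (hg.continuous_iteratedDeriv k (by exact_mod_cast le_top))

end ContDiffBounded

theorem abs_sub_sub_mul_le_of_lipschitzWith {g g' : ℝ → ℝ} {K : ℝ≥0}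
    (hg : ∀ s, HasDerivAt g (g' s) s) (hg' : LipschitzWith K g') (a u : ℝ) :
    |g (a + u) - g a - g' a * u| ≤ K * u ^ 2 := by
  set φ : ℝ → ℝ := fun v => g (a + v) - g' a * v
  have hφ : ∀ v, HasDerivAt φ (g' (a + v) - g' a) v := fun v =>
    ((hg (a + v)).comp_const_add a v).sub (by simpa using (hasDerivAt_id' v).const_mul (g' a))
  have hφ' : ∀ v ∈ Metric.closedBall (0 : ℝ) |u|, ‖g' (a + v) - g' a‖ ≤ K * |u| := by
    intro v hv
    calc ‖g' (a + v) - g' a‖ ≤ K * ‖a + v - a‖ := by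
          simpa [← dist_eq_norm] using hg'.dist_le_mul (a + v) a
      _ ≤ K * |u| := by
          gcongr
          simpa using Metric.mem_closedBall.1 hv
  have hmvt := (convex_closedBall (0 : ℝ) |u|).norm_image_sub_le_of_norm_hasDerivWithin_le
    (fun v _ => (hφ v).hasDerivWithinAt) hφ' (x := 0) (y := u) (by simp) (by simp)
  calc |g (a + u) - g a - g' a * u| = ‖φ u - φ 0‖ := by simp [φ]; ring_nf
    _ ≤ K * |u| * ‖u - 0‖ := hmvt
    _ = K * u ^ 2 := by simp [mul_assoc, ← sq]

namespace ContinuousMap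

variable {M : Type*} [TopologicalSpace M] [CompactSpace M]

theorem hasFDerivAt_comp_left {g g' : C(ℝ, ℝ)} {K : ℝ≥0}
    (hg : ∀ s, HasDerivAt g (g' s) s) (hg' : LipschitzWith K g') (x : C(M, ℝ)) :
    HasFDerivAt (fun y : C(M, ℝ) => g.comp y)
      (ContinuousLinearMap.mul ℝ C(M, ℝ) (g'.comp x)) x := by
  rw [hasFDerivAt_iff_isLittleO_nhds_zero]
  have hquad : ∀ v : C(M, ℝ),
      ‖g.comp (x + v) - g.comp x - ContinuousLinearMap.mul ℝ C(M, ℝ) (g'.comp x) v‖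
        ≤ K * ‖v‖ ^ 2 := fun v => by
    refine (norm_le _ (by positivity)).2 fun t => ?_
    calc |g (x t + v t) - g (x t) - g' (x t) * v t| ≤ K * v t ^ 2 :=
          abs_sub_sub_mul_le_of_lipschitzWith hg hg' (x t) (v t)
      _ ≤ K * ‖v‖ ^ 2 := by
          refine mul_le_mul_of_nonneg_left ?_ K.2
          rw [← sq_abs]
          exact pow_le_pow_left₀ (abs_nonneg _) (v.norm_coe_le_norm t) 2
  refine IsBigO.trans_isLittleO (g := fun v : C(M, ℝ) => ‖v‖ ^ 2) ?_
    (isLittleO_norm_pow_id one_lt_two)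
  exact .of_bound K (.of_forall fun v => by simpa using hquad v)

theorem exists_hasFDerivAt_comp_left {g : C(ℝ, ℝ)} (hg : ContDiffBounded g) :
    ∃ g' : C(ℝ, ℝ), ⇑g' = deriv g ∧ ∀ x : C(M, ℝ),
      HasFDerivAt (fun y : C(M, ℝ) => g.comp y)
        (ContinuousLinearMap.mul ℝ C(M, ℝ) (g'.comp x)) x := by
  obtain ⟨K, hK⟩ := hg.exists_lipschitzWith_deriv
  refine ⟨⟨deriv g, hK.continuous⟩, rfl, hasFDerivAt_comp_left (fun s => ?_) hK⟩
  exact (hg.1.differentiable (by simp) s).hasDerivAt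

theorem contDiff_comp_left (n : ℕ) {g : C(ℝ, ℝ)} (hg : ContDiffBounded g) :
    ContDiff ℝ n (fun x : C(M, ℝ) => g.comp x) := by
  induction n generalizing g with
  | zero =>
    obtain ⟨_, _, hderiv⟩ := exists_hasFDerivAt_comp_left (M := M) hg
    exact contDiff_zero.2 (continuous_iff_continuousAt.2 fun x => (hderiv x).continuousAt)
  | succ n ih =>
    obtain ⟨g', hg', hderiv⟩ := exists_hasFDerivAt_comp_left (M := M) hg
    rw [Nat.cast_succ, contDiff_succ_iff_hasFDerivAt]
    refine ⟨_, ?_, hderiv⟩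
    have hmul : ContDiff ℝ n (ContinuousLinearMap.mul ℝ C(M, ℝ)) := by fun_prop
    exact hmul.comp (ih (hg' ▸ hg.deriv))

theorem exists_bound_norm_iteratedFDeriv_comp_left (n : ℕ) {g : C(ℝ, ℝ)}
    (hg : ContDiffBounded g) :
    ∃ C, ∀ x : C(M, ℝ),
      ‖iteratedFDeriv ℝ n (fun y : C(M, ℝ) => g.comp y) x‖ ≤ C := by
  induction n generalizing g with
  | zero =>
    obtain ⟨C, hC⟩ := hg.2 0
    refine ⟨max C 0, fun x => ?_⟩
    rw [norm_iteratedFDeriv_zero, norm_le _ (le_max_right _ _)]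
    exact fun t => (hC (x t)).trans (le_max_left _ _)
  | succ n ih =>
    obtain ⟨g', hg', hderiv⟩ := exists_hasFDerivAt_comp_left (M := M) hg
    have hg'b : ContDiffBounded g' := hg' ▸ hg.deriv
    obtain ⟨C, hC⟩ := ih hg'b
    refine ⟨C, fun x => ?_⟩
    have hfderiv : fderiv ℝ (fun y : C(M, ℝ) => g.comp y) =
        ContinuousLinearMap.mul ℝ C(M, ℝ) ∘ fun y => g'.comp y :=
      funext fun y => (hderiv y).fderiv
    rw [← norm_iteratedFDeriv_fderiv, hfderiv, ContinuousLinearMap.iteratedFDeriv_comp_left _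
      (contDiff_comp_left n hg'b).contDiffAt le_rfl]
    calc _ ≤ ‖ContinuousLinearMap.mul ℝ C(M, ℝ)‖ *
            ‖iteratedFDeriv ℝ n (fun y : C(M, ℝ) => g'.comp y) x‖ :=
          ContinuousLinearMap.norm_compContinuousMultilinearMap_le _ _
      _ ≤ 1 * C := by gcongr; exacts [ContinuousLinearMap.opNorm_mul_le ℝ _, hC x]
      _ = C := one_mul C

theorem eventually_comp_left_eq_self {g : C(ℝ, ℝ)} (hg : ∀ᶠ s in 𝓝 0, g s = s) :
    ∀ᶠ x in 𝓝 (0 : C(M, ℝ)), g.comp x = x := by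
  obtain ⟨ε, hε, hball⟩ := Metric.eventually_nhds_iff.1 hg
  filter_upwards [Metric.ball_mem_nhds 0 hε] with x hx
  ext t
  refine hball ?_
  rw [mem_ball_zero_iff] at hx
  simpa using (x.norm_coe_le_norm t).trans_lt hx

end ContinuousMap

theorem CM_KMap_general
    {M : Type*} [TopologicalSpace M] [CompactSpace M]
    (h : ℝ → ℝ) (hh : ContDiff ℝ (⊤ : ℕ∞) h)
    (hh1 : ∀ᶠ s in nhds (0 : ℝ), h s = 1)
    (hhsupp : ∃ r : ℝ, ∀ s : ℝ, r ≤ |s| → h s = 0)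
    (H : C(M, ℝ) → C(M, ℝ)) (hHdef : ∀ (x : C(M, ℝ)) (t : M), H x t = h (x t) * x t) :
    ContDiff ℝ (⊤ : ℕ∞) H ∧ (∀ᶠ x in nhds (0 : C(M, ℝ)), H x = x) ∧
      (∃ C : ℝ, ∀ x, ‖H x‖ ≤ C) ∧
      ∀ n : ℕ, ∃ C : ℝ, ∀ x, ‖iteratedFDeriv ℝ n H x‖ ≤ C := by
  let g : C(ℝ, ℝ) := ⟨fun s => h s * s, hh.continuous.mul continuous_id⟩
  have hH : H = fun x => g.comp x := funext fun x => ContinuousMap.ext (hHdef x)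
  have hg : ContDiffBounded g := by
    refine .of_hasCompactSupport (hh.mul contDiff_id) ?_
    obtain ⟨r, hr⟩ := hhsupp
    refine HasCompactSupport.intro (isCompact_closedBall 0 r) fun s hs => ?_
    rw [Metric.mem_closedBall, dist_zero_right, Real.norm_eq_abs, not_le] at hs
    simp [g, hr s hs.le]
  have hbound := fun n => ContinuousMap.exists_bound_norm_iteratedFDeriv_comp_left (M := M) n hg
  subst hH
  refine ⟨contDiff_infty.2 fun n => ContinuousMap.contDiff_comp_left n hg,
    ContinuousMap.eventually_comp_left_eq_self ?_, ?_, hbound⟩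
  · filter_upwards [hh1] with s hs
    simp [g, hs]
  · simpa only [norm_iteratedFDeriv_zero] using hbound 0

/-- On `X = C(M, ℝ)` (`M` compact Hausdorff, sup norm), for a `C^∞` function `h : ℝ → ℝ`
with bounded support, equal to `1` near `0`, with all derivatives bounded, the map
`H x = (t ↦ h (x t) * x t)` is a `C^∞` K-map on `X` with all iterated Fréchet derivatives
bounded. -/
theorem CM_KMap
    {M : Type*} [TopologicalSpace M] [CompactSpace M] [T2Space M]
    (h : ℝ → ℝ) (hh : ContDiff ℝ (⊤ : ℕ∞) h)
    (hh1 : ∀ᶠ s in nhds (0 : ℝ), h s = 1)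
    (hhsupp : ∃ r : ℝ, ∀ s : ℝ, r ≤ |s| → h s = 0)
    (hhder : ∀ n : ℕ, ∃ C : ℝ, ∀ s : ℝ, |iteratedDeriv n h s| ≤ C)
    (H : C(M, ℝ) → C(M, ℝ)) (hHdef : ∀ (x : C(M, ℝ)) (t : M), H x t = h (x t) * x t) :
    ContDiff ℝ (⊤ : ℕ∞) H ∧ (∀ᶠ x in nhds (0 : C(M, ℝ)), H x = x) ∧
      (∃ C : ℝ, ∀ x, ‖H x‖ ≤ C) ∧
      ∀ n : ℕ, ∃ C : ℝ, ∀ x, ‖iteratedFDeriv ℝ n H x‖ ≤ C :=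
  CM_KMap_general h hh hh1 hhsupp H hHdef
end

section
/- Let M be a compact Hausdorff topological space, X = C(M, ℝ) with the supremum norm, and Y any Banach space. Then every map f defined and C^∞ on a neighborhood of 0 in X with values in Y admits a global C^∞ representative: a C^∞ map F : X → Y coinciding with f on some neighborhood of 0. Moreover, if f and all of its iterated Fréchet derivatives are bounded on an open ball around 0, then F can be chosen so that F and all of its iterated Fréchet derivatives are bounded on all of X. -/
/-!
Fix a smooth `σ : ℝ → ℝ` with compact support, equal to the identity on `[-r/3, r/3]` and bounded
by `2r/3`. The superposition map `g x = σ ∘ x` on `C(M, ℝ)` is smooth, its derivative at `x` being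
multiplication by `σ' ∘ x`; hence its `n`-th derivative is bounded by `sup |σ⁽ⁿ⁾|`. It is the
identity near `0` and takes values in the ball of radius `r`, so `F = f ∘ g` is a global smooth
representative of `f`, and the Faà di Bruno estimate bounds the derivatives of `F` when those of
`f` are bounded on that ball.
-/

open Filter Metric Set Topology
open scoped Nat ContDiff

theorem abs_sub_sub_mul_le_of_hasDerivAt {ψ ψ' : ℝ → ℝ} (hψ : ∀ t, HasDerivAt ψ (ψ' t) t)
    {a b ε : ℝ} (hε : ∀ c, |c| ≤ |b| → |ψ' (a + c) - ψ' a| ≤ ε) :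
    |ψ (a + b) - ψ a - ψ' a * b| ≤ ε * |b| := by
  have hmvt := (convex_closedBall a |b|).norm_image_sub_le_of_norm_hasDerivWithin_le
    (f := fun y => ψ y - ψ' a * y) (f' := fun y => ψ' y - ψ' a)
    (fun y _ => ((hψ y).sub ((hasDerivAt_id y).const_mul (ψ' a))).hasDerivWithinAt.congr_deriv
      (by simp))
    (fun y hy => by
      have := hε (y - a) (by simpa [Real.dist_eq] using hy)
      rwa [add_sub_cancel] at this)
    (x := a) (y := a + b) (mem_closedBall_self (abs_nonneg b)) (by simp)
  simp only [Real.norm_eq_abs, add_sub_cancel_left] at hmvt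
  convert hmvt using 2
  ring

theorem exists_smooth_truncation {c : ℝ} (hc : 0 < c) :
    ∃ σ : ℝ → ℝ, ContDiff ℝ ∞ σ ∧ HasCompactSupport σ ∧ (∀ t, |t| ≤ c → σ t = t) ∧
      ∀ t, |σ t| ≤ 2 * c := by
  let χ : ContDiffBump (0 : ℝ) := ⟨c, 2 * c, hc, by linarith⟩
  refine ⟨fun t => t * χ t, contDiff_id.mul χ.contDiff, χ.hasCompactSupport.mul_left,
    fun t ht => ?_, fun t => ?_⟩
  · dsimp only
    rw [χ.one_of_mem_closedBall (by simpa [Real.dist_eq] using ht), mul_one]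
  · dsimp only
    rcases lt_or_ge |t| (2 * c) with ht | ht
    · rw [abs_mul, abs_of_nonneg χ.nonneg]
      exact (mul_le_of_le_one_right (abs_nonneg t) χ.le_one).trans ht.le
    · rw [χ.zero_of_le_dist (by simpa [Real.dist_eq] using ht), mul_zero, abs_zero]
      positivity

namespace ContinuousMap

variable {M : Type*} [TopologicalSpace M] [CompactSpace M]

theorem hasFDerivAt_comp_left_s8 {ψ ψ' : C(ℝ, ℝ)} (hψ : ∀ t, HasDerivAt ψ (ψ' t) t)
    (x : C(M, ℝ)) :
    HasFDerivAt (fun y : C(M, ℝ) => ψ.comp y)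
      (ContinuousLinearMap.mul ℝ C(M, ℝ) (ψ'.comp x)) x := by
  rw [hasFDerivAt_iff_isLittleO_nhds_zero, Asymptotics.isLittleO_iff]
  intro ε hε
  -- Uniform continuity of `ψ'` near the compact range of `x` is continuity of `ψ'.comp` at `x`.
  obtain ⟨δ, hδ, hψ'⟩ := Metric.continuous_iff.mp (continuous_postcomp ψ') x ε hε
  filter_upwards [ball_mem_nhds 0 hδ] with h hh
  rw [mem_ball_zero_iff] at hh
  refine (norm_le _ (by positivity)).mpr fun t => ?_
  have hosc : ∀ c, |c| ≤ |h t| → |ψ' (x t + c) - ψ' (x t)| ≤ ε := by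
    intro c hc
    have hdist : dist (x + const M c) x < δ := by
      rw [dist_eq_norm, add_sub_cancel_left]
      exact ((norm_le _ (norm_nonneg h)).mpr fun _ => hc.trans (h.norm_coe_le_norm t)).trans_lt hh
    exact (dist_apply_le_dist t).trans (hψ' _ hdist).le
  calc |ψ (x t + h t) - ψ (x t) - ψ' (x t) * h t| ≤ ε * |h t| :=
        abs_sub_sub_mul_le_of_hasDerivAt hψ hosc
    _ ≤ ε * ‖h‖ := by gcongr; exact h.norm_coe_le_norm t

variable {ψ : ℕ → C(ℝ, ℝ)}

theorem contDiff_comp_left_s8 (hψ : ∀ n t, HasDerivAt (ψ n) (ψ (n + 1) t) t) :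
    ContDiff ℝ ∞ (fun x : C(M, ℝ) => (ψ 0).comp x) := by
  suffices h : ∀ (n : ℕ) (ψ : ℕ → C(ℝ, ℝ)), (∀ n t, HasDerivAt (ψ n) (ψ (n + 1) t) t) →
      ContDiff ℝ n (fun x : C(M, ℝ) => (ψ 0).comp x) from
    contDiff_infty.mpr fun n => h n ψ hψ
  intro n
  induction n with
  | zero => exact fun ψ _ => contDiff_zero.mpr (continuous_postcomp _)
  | succ n ih =>
    intro ψ hψ
    exact contDiff_succ_iff_hasFDerivAt.mpr
      ⟨_, (ContinuousLinearMap.mul ℝ C(M, ℝ)).contDiff.comp (ih _ fun k => hψ (k + 1)),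
        hasFDerivAt_comp_left_s8 (hψ 0)⟩

theorem norm_iteratedFDeriv_comp_left_le (hψ : ∀ n t, HasDerivAt (ψ n) (ψ (n + 1) t) t)
    (n : ℕ) {C : ℝ} (hC : ∀ t, |ψ n t| ≤ C) (x : C(M, ℝ)) :
    ‖iteratedFDeriv ℝ n (fun y : C(M, ℝ) => (ψ 0).comp y) x‖ ≤ C := by
  induction n generalizing ψ with
  | zero =>
    rw [norm_iteratedFDeriv_zero]
    exact (norm_le _ ((abs_nonneg _).trans (hC 0))).mpr fun t => hC (x t)
  | succ n ih =>
    have hfderiv : fderiv ℝ (fun y : C(M, ℝ) => (ψ 0).comp y)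
        = ContinuousLinearMap.mul ℝ C(M, ℝ) ∘ fun y => (ψ 1).comp y :=
      funext fun y => (hasFDerivAt_comp_left_s8 (hψ 0) y).fderiv
    have hcomp := (ContinuousLinearMap.mul ℝ C(M, ℝ)).norm_iteratedFDeriv_comp_left
      (G := C(M, ℝ) →L[ℝ] C(M, ℝ)) (f := fun y : C(M, ℝ) => (ψ 1).comp y) (x := x) (n := n)
      (contDiff_comp_left_s8 fun k => hψ (k + 1)).contDiffAt (mod_cast le_top)
    rw [← norm_iteratedFDeriv_fderiv, hfderiv]
    have hmul : ‖ContinuousLinearMap.mul ℝ C(M, ℝ)‖ ≤ 1 := ContinuousLinearMap.opNorm_mul_le _ _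
    exact hcomp.trans <| (mul_le_of_le_one_left (norm_nonneg _) hmul).trans <|
      ih (ψ := fun k => ψ (k + 1)) (fun k => hψ (k + 1)) hC

theorem exists_contDiff_eventuallyEq_id_mapsTo_ball {r : ℝ} (hr : 0 < r) :
    ∃ g : C(M, ℝ) → C(M, ℝ), ContDiff ℝ ∞ g ∧ g =ᶠ[𝓝 0] id ∧ (∀ x, g x ∈ ball 0 r) ∧
      ∀ n : ℕ, ∃ C, ∀ x, ‖iteratedFDeriv ℝ n g x‖ ≤ C := by
  obtain ⟨σ, hσ, hσc, hσid, hσb⟩ := exists_smooth_truncation (c := r / 3) (by positivity)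
  let ψ : ℕ → C(ℝ, ℝ) := fun n =>
    ⟨iteratedDeriv n σ, hσ.continuous_iteratedDeriv n (mod_cast le_top)⟩
  have hψ : ∀ n t, HasDerivAt (ψ n) (ψ (n + 1) t) t := fun n t => by
    simp only [ψ, coe_mk, iteratedDeriv_succ]
    exact ((hσ.differentiable_iteratedDeriv n (mod_cast WithTop.coe_lt_top _)) t).hasDerivAt
  have hψ0 : ∀ (x : C(M, ℝ)) t, (ψ 0).comp x t = σ (x t) := fun x t => by simp [ψ]
  refine ⟨fun x => (ψ 0).comp x, contDiff_comp_left_s8 hψ, ?_, fun x => ?_, fun n => ?_⟩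
  · filter_upwards [ball_mem_nhds 0 (by positivity : 0 < r / 3)] with x hx
    ext t
    exact (hψ0 x t).trans <| hσid _ <| (x.norm_coe_le_norm t).trans (mem_ball_zero_iff.mp hx).le
  · refine mem_ball_zero_iff.mpr <| ((norm_le _ (by positivity)).mpr fun t => ?_).trans_lt
      (by linarith : 2 * (r / 3) < r)
    rw [hψ0]
    exact hσb (x t)
  · obtain ⟨C, hC⟩ := (hσc.iteratedFDeriv n).exists_bound_of_continuous
      (hσ.continuous_iteratedFDeriv (mod_cast le_top))
    exact ⟨C, norm_iteratedFDeriv_comp_left_le hψ n fun t => by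
      simpa [ψ, norm_iteratedFDeriv_eq_norm_iteratedDeriv] using hC t⟩

end ContinuousMap

theorem exists_bound_norm_iteratedFDeriv_comp {𝕜 E F G : Type*} [NontriviallyNormedField 𝕜]
    [NormedAddCommGroup E] [NormedSpace 𝕜 E] [NormedAddCommGroup F] [NormedSpace 𝕜 F]
    [NormedAddCommGroup G] [NormedSpace 𝕜 G] {f : F → G} {g : E → F} {s : Set F}
    (hs : UniqueDiffOn 𝕜 s) (hf : ContDiffOn 𝕜 ∞ f s)
    (hfb : ∀ n : ℕ, ∃ C, ∀ y ∈ s, ‖iteratedFDerivWithin 𝕜 n f s y‖ ≤ C) (hg : ContDiff 𝕜 ∞ g)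
    (hgb : ∀ n : ℕ, ∃ C, ∀ x, ‖iteratedFDeriv 𝕜 n g x‖ ≤ C) (hgs : ∀ x, g x ∈ s) (n : ℕ) :
    ∃ C, ∀ x, ‖iteratedFDeriv 𝕜 n (f ∘ g) x‖ ≤ C := by
  choose Cf hCf using hfb
  choose Cg hCg using hgb
  obtain ⟨A, hA⟩ := ((finite_Iic n).image Cf).bddAbove
  obtain ⟨B, hB⟩ := ((finite_Iic n).image Cg).bddAbove
  refine ⟨n ! * A * max 1 B ^ n, fun x => ?_⟩
  rw [← iteratedFDerivWithin_univ]
  refine norm_iteratedFDerivWithin_comp_le hf hg.contDiffOn (mod_cast le_top) hs uniqueDiffOn_univ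
    (fun x _ => hgs x) (mem_univ x)
    (fun i hi => (hCf i _ (hgs x)).trans (hA (mem_image_of_mem _ hi))) fun i hi hin => ?_
  rw [iteratedFDerivWithin_univ]
  calc ‖iteratedFDeriv 𝕜 i g x‖ ≤ Cg i := hCg i x
    _ ≤ max 1 B := (hB (mem_image_of_mem _ hin)).trans (le_max_right _ _)
    _ ≤ max 1 B ^ i := le_self_pow₀ (le_max_left _ _) (by omega)

theorem CM_extension_general
    {M : Type*} [TopologicalSpace M] [CompactSpace M]
    {Y : Type*} [NormedAddCommGroup Y] [NormedSpace ℝ Y]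
    (f : C(M, ℝ) → Y) (U : Set C(M, ℝ)) (hUopen : IsOpen U) (hU0 : (0 : C(M, ℝ)) ∈ U)
    (hf : ContDiffOn ℝ (⊤ : ℕ∞) f U) :
    (∃ F : C(M, ℝ) → Y, ContDiff ℝ (⊤ : ℕ∞) F ∧ ∀ᶠ x in nhds (0 : C(M, ℝ)), F x = f x) ∧
      ∀ R : ℝ, 0 < R → ball (0 : C(M, ℝ)) R ⊆ U →
        (∀ n : ℕ, ∃ C : ℝ, ∀ x ∈ ball (0 : C(M, ℝ)) R,
          ‖iteratedFDerivWithin ℝ n f (ball (0 : C(M, ℝ)) R) x‖ ≤ C) →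
        ∃ F : C(M, ℝ) → Y, ContDiff ℝ (⊤ : ℕ∞) F ∧
          (∀ᶠ x in nhds (0 : C(M, ℝ)), F x = f x) ∧
          ∀ n : ℕ, ∃ C : ℝ, ∀ x, ‖iteratedFDeriv ℝ n F x‖ ≤ C := by
  refine ⟨?_, fun R hR hRU hfb => ?_⟩
  · obtain ⟨ε, hε, hεU⟩ := Metric.isOpen_iff.mp hUopen 0 hU0
    obtain ⟨g, hg, hg0, hgε, -⟩ := ContinuousMap.exists_contDiff_eventuallyEq_id_mapsTo_ball
      (M := M) hε
    exact ⟨f ∘ g, hf.comp_contDiff hg fun x => hεU (hgε x), hg0.mono fun x hx => congrArg f hx⟩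
  · obtain ⟨g, hg, hg0, hgR, hgb⟩ := ContinuousMap.exists_contDiff_eventuallyEq_id_mapsTo_ball
      (M := M) hR
    exact ⟨f ∘ g, hf.comp_contDiff hg fun x => hRU (hgR x), hg0.mono fun x hx => congrArg f hx,
      exists_bound_norm_iteratedFDeriv_comp isOpen_ball.uniqueDiffOn (hf.mono hRU) hfb hg hgb hgR⟩

/-- For `X = C(M, ℝ)` (`M` compact Hausdorff, sup norm) and any Banach space `Y`, every map
`f` that is `C^∞` on a neighborhood of `0` admits a global `C^∞` representative `F`.
Moreover, if `f` and all its iterated derivatives are bounded on an open ball around `0`,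
then `F` can be chosen bounded on all of `X` together with all its iterated derivatives. -/
theorem CM_extension
    {M : Type*} [TopologicalSpace M] [CompactSpace M] [T2Space M]
    {Y : Type*} [NormedAddCommGroup Y] [NormedSpace ℝ Y] [CompleteSpace Y]
    (f : C(M, ℝ) → Y) (U : Set C(M, ℝ)) (hUopen : IsOpen U) (hU0 : (0 : C(M, ℝ)) ∈ U)
    (hf : ContDiffOn ℝ (⊤ : ℕ∞) f U) :
    (∃ F : C(M, ℝ) → Y, ContDiff ℝ (⊤ : ℕ∞) F ∧ ∀ᶠ x in nhds (0 : C(M, ℝ)), F x = f x) ∧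
      ∀ R : ℝ, 0 < R → ball (0 : C(M, ℝ)) R ⊆ U →
        (∀ n : ℕ, ∃ C : ℝ, ∀ x ∈ ball (0 : C(M, ℝ)) R,
          ‖iteratedFDerivWithin ℝ n f (ball (0 : C(M, ℝ)) R) x‖ ≤ C) →
        ∃ F : C(M, ℝ) → Y, ContDiff ℝ (⊤ : ℕ∞) F ∧
          (∀ᶠ x in nhds (0 : C(M, ℝ)), F x = f x) ∧
          ∀ n : ℕ, ∃ C : ℝ, ∀ x, ‖iteratedFDeriv ℝ n F x‖ ≤ C :=
  CM_extension_general f U hUopen hU0 hf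
end

section
/- (Borel lemma for Banach spaces) Let X be a real Banach space possessing a C^∞ K-map all of whose iterated Fréchet derivatives are bounded on X. Then for every Banach space Y and every sequence (P_j)_{j=0}^∞, where P_j is a continuous homogeneous polynomial map of degree j from X to Y, there exists a C^∞ map f : X → Y, all of whose iterated Fréchet derivatives are bounded on X, such that for every j and every x ∈ X, the j-th iterated Fréchet derivative of f at 0 satisfies D^j f(0)(x, ..., x) = P_j(x). -/
/-!
Rescale the K-map to `h_t x = t • H (t⁻¹ • x)`, still the identity near `0`, and put
`f x = ∑ⱼ (j!)⁻¹ • gⱼ (h_{tⱼ} x, …, h_{tⱼ} x)`. Near `0` the `j`-th summand is `Pⱼ / j!`, whose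
only nonzero derivative at `0` is the `j`-th one, equal to `Pⱼ`. Since `‖h_t‖ ≤ t ‖H‖_∞` and
`‖D^m h_t‖ ≤ t^{1-m} ‖D^m H‖_∞`, Faà di Bruno bounds `D^n` of the `j`-th summand by a constant
times `t^{j-2n}`; for `j > 2n` this is `O(tⱼ)`, so small enough scales `tⱼ` make these bounds at
most `2^{-j}` and every derivative series converges uniformly.
-/

open Filter Topology
open scoped Nat ContDiff

theorem Nat.descFactorial_le_factorial (n k : ℕ) : n.descFactorial k ≤ n ! := by
  rcases le_or_gt k n with h | h
  · rw [← Nat.factorial_mul_descFactorial h]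
    exact Nat.le_mul_of_pos_left _ (Nat.factorial_pos _)
  · simp [Nat.descFactorial_eq_zero_iff_lt.2 h]

theorem exists_monotone_bound {α : Type*} {u : ℕ → α → ℝ} (h : ∀ n, ∃ C, ∀ x, u n x ≤ C) :
    ∃ A : ℕ → ℝ, Monotone A ∧ (∀ n, 1 ≤ A n) ∧ ∀ n m, m ≤ n → ∀ x, u m x ≤ A n := by
  choose C hC using h
  refine ⟨fun n => 1 + ∑ m ∈ Finset.range (n + 1), |C m|, fun a b hab => ?_,
    fun n => le_add_of_nonneg_right (Finset.sum_nonneg fun _ _ => abs_nonneg _),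
    fun n m hmn x => ?_⟩
  · exact add_le_add_right (Finset.sum_le_sum_of_subset_of_nonneg
      (Finset.range_subset_range.2 (by omega)) fun _ _ _ => abs_nonneg _) 1
  · calc u m x ≤ |C m| := (hC m x).trans (le_abs_self _)
      _ ≤ ∑ m ∈ Finset.range (n + 1), |C m| :=
        Finset.single_le_sum (f := fun m => |C m|) (fun _ _ => abs_nonneg _)
          (Finset.mem_range.2 (by omega))
      _ ≤ _ := le_add_of_nonneg_left zero_le_one

theorem exists_summable_bound {α : Type*} {u : ℕ → α → ℝ} {g : ℕ → ℝ} (hg : Summable g)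
    (hbdd : ∀ j, ∃ C, ∀ x, u j x ≤ C) (htail : ∀ᶠ j in atTop, ∀ x, u j x ≤ g j) :
    ∃ v : ℕ → ℝ, Summable v ∧ ∀ j x, u j x ≤ v j := by
  choose C hC using hbdd
  obtain ⟨N, hN⟩ := eventually_atTop.1 htail
  refine ⟨fun j => if j < N then C j else g j,
    hg.congr_atTop (eventually_atTop.2 ⟨N, fun j hj => by simp [not_lt.2 hj]⟩), fun j x => ?_⟩
  dsimp only
  split_ifs with hj
  · exact hC j x
  · exact hN j (not_lt.1 hj) x

namespace ContinuousMultilinearMap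

variable {𝕜 E F : Type*} [NontriviallyNormedField 𝕜] [NormedAddCommGroup E] [NormedSpace 𝕜 E]
  [NormedAddCommGroup F] [NormedSpace 𝕜 F] {i : ℕ}

theorem contDiff_comp_diagonal (G : E [×i]→L[𝕜] F) {n : WithTop ℕ∞} :
    ContDiff 𝕜 n fun x : E => G fun _ => x :=
  G.contDiff.comp (contDiff_pi.2 fun _ => contDiff_id)

theorem hasFPowerSeriesOnBall_comp_diagonal (G : E [×i]→L[𝕜] F) :
    HasFPowerSeriesOnBall (fun x : E => G fun _ => x) (Pi.single i G) 0 ⊤ := by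
  refine (HasFiniteFPowerSeriesOnBall.mk' (n := i + 1) (fun m hm => ?_) ENNReal.zero_lt_top
    fun y _ => ?_).toHasFPowerSeriesOnBall
  · exact Pi.single_eq_of_ne (by omega) _
  · rw [zero_add, Finset.sum_eq_single_of_mem i (Finset.self_mem_range_succ i)]
    · simp
    · intro k _ hk
      simp [Pi.single_eq_of_ne hk]

theorem iteratedFDeriv_comp_diagonal_zero_apply [CompleteSpace F] (G : E [×i]→L[𝕜] F)
    (k : ℕ) (y : E) :
    iteratedFDeriv 𝕜 k (fun x : E => G fun _ => x) 0 (fun _ => y) =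
      if k = i then i ! • G (fun _ => y) else 0 := by
  rw [← (hasFPowerSeriesOnBall_comp_diagonal G).factorial_smul]
  split_ifs with hk
  · subst hk
    simp
  · simp [Pi.single_eq_of_ne hk]

theorem iteratedFDeriv_comp_diagonal_comp_zero_apply [CompleteSpace F] (G : E [×i]→L[𝕜] F)
    {f : E → E} (hf : f =ᶠ[𝓝 0] id) (k : ℕ) (y : E) :
    iteratedFDeriv 𝕜 k (fun x : E => G fun _ => f x) 0 (fun _ => y) =
      if k = i then i ! • G (fun _ => y) else 0 := by
  have h : (fun x : E => G fun _ => f x) =ᶠ[𝓝 0] fun x => G fun _ => x :=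
    hf.fun_comp fun x => G fun _ => x
  rw [(h.iteratedFDeriv 𝕜 k).eq_of_nhds]
  exact G.iteratedFDeriv_comp_diagonal_zero_apply k y

theorem norm_iteratedFDeriv_comp_diagonal_le (G : E [×i]→L[𝕜] F) (k : ℕ) (y : E) :
    ‖iteratedFDeriv 𝕜 k (fun x : E => G fun _ => x) y‖ ≤ i ! * ‖G‖ * ‖y‖ ^ (i - k) := by
  set Δ : E →L[𝕜] (Fin i → E) := ContinuousLinearMap.pi fun _ => ContinuousLinearMap.id 𝕜 E
  have hΔ : ‖Δ‖ ≤ 1 := ContinuousLinearMap.opNorm_le_bound _ zero_le_one fun x => by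
    rw [one_mul]
    exact (pi_norm_le_iff_of_nonneg (norm_nonneg x)).2 fun _ => le_rfl
  have hG := G.norm_iteratedFDeriv_le k (Δ y)
  rw [Fintype.card_fin] at hG
  change ‖iteratedFDeriv 𝕜 k (G ∘ Δ) y‖ ≤ _
  rw [Δ.iteratedFDeriv_comp_right G.contDiff y le_top]
  calc _ ≤ ‖iteratedFDeriv 𝕜 k G (Δ y)‖ * ∏ _ : Fin k, ‖Δ‖ :=
        norm_compContinuousLinearMap_le _ _
    _ ≤ ‖iteratedFDeriv 𝕜 k G (Δ y)‖ * 1 := by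
        gcongr
        exact Finset.prod_le_one (fun _ _ => norm_nonneg _) fun _ _ => hΔ
    _ ≤ i.descFactorial k * ‖G‖ * ‖Δ y‖ ^ (i - k) := by rw [mul_one]; exact hG
    _ ≤ i ! * ‖G‖ * ‖y‖ ^ (i - k) := by
        gcongr
        · exact_mod_cast Nat.descFactorial_le_factorial i k
        · simpa using Δ.le_of_opNorm_le hΔ y

theorem norm_iteratedFDeriv_comp_diagonal_comp_le {X : Type*} [NormedAddCommGroup X]
    [NormedSpace 𝕜 X] {n : ℕ} (G : E [×i]→L[𝕜] F) {f : X → E} (hf : ContDiff 𝕜 n f) {x : X}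
    {a D : ℝ} (ha : ‖f x‖ ≤ a) (ha1 : a ≤ 1)
    (hD : ∀ m, 1 ≤ m → m ≤ n → ‖iteratedFDeriv 𝕜 m f x‖ ≤ D ^ m) :
    ‖iteratedFDeriv 𝕜 n (fun x => G fun _ => f x) x‖ ≤ n ! * (i ! * ‖G‖ * a ^ (i - n)) * D ^ n :=
  norm_iteratedFDeriv_comp_le G.contDiff_comp_diagonal hf le_rfl x (fun k hk =>
    (G.norm_iteratedFDeriv_comp_diagonal_le k (f x)).trans <| by
      gcongr
      calc ‖f x‖ ^ (i - k) ≤ a ^ (i - k) := by gcongr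
        _ ≤ a ^ (i - n) := pow_le_pow_of_le_one ((norm_nonneg _).trans ha) ha1 (by omega))
    hD

end ContinuousMultilinearMap

section Rescale

variable {E F : Type*} [NormedAddCommGroup E] [NormedSpace ℝ E] [NormedAddCommGroup F]
  [NormedSpace ℝ F]

noncomputable def rescale (t : ℝ) (H : E → F) (x : E) : F := t • H (t⁻¹ • x)

theorem ContDiff.rescale {n : WithTop ℕ∞} {H : E → F} (hH : ContDiff ℝ n H) (t : ℝ) :
    ContDiff ℝ n (rescale t H) :=
  contDiff_const.smul (hH.comp (contDiff_const.smul contDiff_id))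

theorem rescale_eventuallyEq_id {H : E → E} (hH : H =ᶠ[𝓝 0] id) {t : ℝ} (ht : t ≠ 0) :
    rescale t H =ᶠ[𝓝 0] id := by
  have : Tendsto (fun x : E => t⁻¹ • x) (𝓝 0) (𝓝 0) := by
    simpa using (continuous_const_smul t⁻¹).tendsto (0 : E)
  filter_upwards [this.eventually hH] with x hx
  simp [rescale, hx, smul_inv_smul₀ ht]

theorem norm_rescale_le {H : E → F} {C t : ℝ} (hH : ∀ x, ‖H x‖ ≤ C) (ht : 0 ≤ t) (x : E) :
    ‖rescale t H x‖ ≤ t * C := by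
  rw [rescale, norm_smul, Real.norm_of_nonneg ht]
  exact mul_le_mul_of_nonneg_left (hH _) ht

theorem norm_iteratedFDeriv_rescale_le {m : ℕ} {H : E → F} (hH : ContDiff ℝ m H) {t : ℝ}
    (ht : 0 < t) (x : E) :
    ‖iteratedFDeriv ℝ m (rescale t H) x‖ ≤ t * t⁻¹ ^ m * ‖iteratedFDeriv ℝ m H (t⁻¹ • x)‖ := by
  set M : E →L[ℝ] E := t⁻¹ • ContinuousLinearMap.id ℝ E
  have hM : ‖M‖ ≤ t⁻¹ := by
    simpa [Real.norm_of_nonneg (inv_nonneg.2 ht.le)] using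
      (norm_smul_le t⁻¹ (ContinuousLinearMap.id ℝ E)).trans
        (mul_le_mul_of_nonneg_left ContinuousLinearMap.norm_id_le (by positivity))
  change ‖iteratedFDeriv ℝ m (fun x => t • (H ∘ M) x) x‖ ≤ _
  rw [iteratedFDeriv_const_smul_apply' (hH.comp M.contDiff).contDiffAt, norm_smul,
    Real.norm_of_nonneg ht.le, M.iteratedFDeriv_comp_right hH x le_rfl, mul_assoc]
  gcongr
  calc _ ≤ ‖iteratedFDeriv ℝ m H (M x)‖ * ∏ _ : Fin m, ‖M‖ :=
        ContinuousMultilinearMap.norm_compContinuousLinearMap_le _ _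
    _ ≤ ‖iteratedFDeriv ℝ m H (M x)‖ * t⁻¹ ^ m := by
        rw [Finset.prod_const, Finset.card_univ, Fintype.card_fin]
        gcongr
    _ = t⁻¹ ^ m * ‖iteratedFDeriv ℝ m H (t⁻¹ • x)‖ := mul_comm _ _

end Rescale

theorem ContinuousMultilinearMap.norm_iteratedFDeriv_comp_diagonal_comp_rescale_le
    {E F : Type*} [NormedAddCommGroup E] [NormedSpace ℝ E] [NormedAddCommGroup F]
    [NormedSpace ℝ F] {j n : ℕ} (G : E [×j]→L[ℝ] F) {H : E → E} (hH : ContDiff ℝ n H)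
    {C B t : ℝ} (hHC : ∀ x, ‖H x‖ ≤ C) (hB : 1 ≤ B)
    (hHB : ∀ m, 1 ≤ m → m ≤ n → ∀ x, ‖iteratedFDeriv ℝ m H x‖ ≤ B)
    (ht : 0 < t) (ht1 : t ≤ 1) (htC : t * C ≤ 1) (x : E) :
    ‖iteratedFDeriv ℝ n (fun x => G fun _ => rescale t H x) x‖
      ≤ n ! * (j ! * ‖G‖ * (t * C) ^ (j - n)) * (B / t) ^ n := by
  refine G.norm_iteratedFDeriv_comp_diagonal_comp_le (hH.rescale t) (norm_rescale_le hHC ht.le x)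
    htC fun m hm hmn => ?_
  calc ‖iteratedFDeriv ℝ m (rescale t H) x‖
      ≤ t * t⁻¹ ^ m * ‖iteratedFDeriv ℝ m H (t⁻¹ • x)‖ :=
        norm_iteratedFDeriv_rescale_le (hH.of_le (by exact_mod_cast hmn)) ht x
    _ ≤ 1 * t⁻¹ ^ m * B ^ m := by
        gcongr
        exact (hHB m hm hmn _).trans (le_self_pow₀ hB (by omega))
    _ = (B / t) ^ m := by rw [one_mul, div_pow, div_eq_mul_inv, inv_pow, mul_comm]

theorem pow_sub_mul_div_pow_le {t a b : ℝ} {n j : ℕ} (ht : 0 < t) (ha : 0 ≤ a) (hab : a ≤ b)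
    (hb : 1 ≤ b) (hta : t * a ≤ 1) (hnj : 2 * n < j) :
    (t * a) ^ (j - n) * (b / t) ^ n ≤ t * b ^ j := by
  obtain ⟨k, rfl⟩ : ∃ k, j = 2 * n + 1 + k := ⟨j - (2 * n + 1), by omega⟩
  calc (t * a) ^ (2 * n + 1 + k - n) * (b / t) ^ n = (t * a) ^ k * (t * a) * (a * b) ^ n := by
        rw [show 2 * n + 1 + k - n = k + 1 + n by omega, pow_add, mul_assoc, ← mul_pow,
          show t * a * (b / t) = a * b by field_simp, pow_succ]
    _ ≤ 1 * (t * b) * (b * b) ^ n := by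
        gcongr
        exact pow_le_one₀ (by positivity) hta
    _ = t * b ^ (2 * n + 1) := by ring
    _ ≤ t * b ^ (2 * n + 1 + k) :=
        mul_le_mul_of_nonneg_left (pow_le_pow_right₀ hb (by omega)) ht.le

theorem exists_borel_scales {A : ℕ → ℝ} (hA : Monotone A) (hA1 : ∀ n, 1 ≤ A n) {c : ℕ → ℝ}
    (hc : ∀ j, 0 ≤ c j) :
    ∃ t : ℕ → ℝ, (∀ j, 0 < t j) ∧ (∀ j, t j ≤ 1) ∧ (∀ j, t j * A 0 ≤ 1) ∧
      ∀ n j, 2 * n < j → n ! * (c j * (t j * A 0) ^ (j - n)) * (A n / t j) ^ n ≤ (1 / 2) ^ j := by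
  -- `K j` dominates both `A 0` and `2 ^ j * n ! * c j * A n ^ j` for every `n ≤ j`.
  set K : ℕ → ℝ := fun j => 2 ^ j * j ! * (c j + 1) * A j ^ (j + 1)
  have hA0 : ∀ j, 0 < A j := fun j => zero_lt_one.trans_le (hA1 j)
  have hAK : ∀ j, A j ≤ K j := fun j =>
    calc A j ≤ 1 * A j ^ (j + 1) := by rw [one_mul]; exact le_self_pow₀ (hA1 j) (by omega)
      _ ≤ K j := by
        refine mul_le_mul_of_nonneg_right ?_ (pow_pos (hA0 j) _).le
        refine one_le_mul_of_one_le_of_one_le (one_le_mul_of_one_le_of_one_le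
          (one_le_pow₀ one_le_two) ?_) (le_add_of_nonneg_left (hc j))
        exact_mod_cast j.factorial_pos
  have hK0 : ∀ j, 0 < K j := fun j => (hA0 j).trans_le (hAK j)
  have htA : ∀ j, (K j)⁻¹ * A 0 ≤ 1 := fun j => by
    rw [inv_mul_le_iff₀ (hK0 j), mul_one]
    exact (hA (Nat.zero_le j)).trans (hAK j)
  refine ⟨fun j => (K j)⁻¹, fun j => inv_pos.2 (hK0 j),
    fun j => inv_le_one_of_one_le₀ ((hA1 j).trans (hAK j)), htA, fun n j hnj => ?_⟩
  have hnj' : n ≤ j := by omega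
  calc n ! * (c j * ((K j)⁻¹ * A 0) ^ (j - n)) * (A n / (K j)⁻¹) ^ n
      = n ! * c j * (((K j)⁻¹ * A 0) ^ (j - n) * (A n / (K j)⁻¹) ^ n) := by ring
    _ ≤ n ! * c j * ((K j)⁻¹ * A n ^ j) := by
        refine mul_le_mul_of_nonneg_left ?_ (mul_nonneg (Nat.cast_nonneg _) (hc j))
        exact pow_sub_mul_div_pow_le (inv_pos.2 (hK0 j)) (hA0 0).le (hA (Nat.zero_le n))
            (hA1 n) (htA j) hnj
    _ ≤ j ! * (c j + 1) * ((K j)⁻¹ * A j ^ (j + 1)) := by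
        have := hc j
        have := hA0 n
        have := inv_pos.2 (hK0 j)
        gcongr ?_ * ?_ * (_ * ?_)
        · exact_mod_cast Nat.factorial_le hnj'
        · linarith
        · calc A n ^ j ≤ A j ^ j := by gcongr; exact hA hnj'
            _ ≤ A j ^ (j + 1) := pow_le_pow_right₀ (hA1 j) (by omega)
    _ = (1 / 2) ^ j * (K j * (K j)⁻¹) := by
        simp only [K, div_pow, one_pow]
        field_simp
    _ = (1 / 2) ^ j := by rw [mul_inv_cancel₀ (hK0 j).ne', mul_one]

section Tsum

variable {𝕜 E F : Type*} [NontriviallyNormedField 𝕜] [IsRCLikeNormedField 𝕜]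
  [NormedAddCommGroup E] [NormedSpace 𝕜 E] [NormedAddCommGroup F] [NormedSpace 𝕜 F]
  [CompleteSpace F] {ψ : ℕ → E → F} {v : ℕ → ℕ → ℝ}

theorem norm_iteratedFDeriv_tsum_le (hψ : ∀ j, ContDiff 𝕜 (⊤ : ℕ∞) (ψ j))
    (hv : ∀ n, Summable (v n)) (hψv : ∀ n j x, ‖iteratedFDeriv 𝕜 n (ψ j) x‖ ≤ v n j)
    (n : ℕ) (x : E) : ‖iteratedFDeriv 𝕜 n (fun y => ∑' j, ψ j y) x‖ ≤ ∑' j, v n j := by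
  rw [iteratedFDeriv_tsum_apply hψ (fun n _ => hv n) (fun n j x _ => hψv n j x) le_top]
  exact tsum_of_norm_bounded (hv n).hasSum fun j => hψv n j x

theorem iteratedFDeriv_tsum_apply_apply (hψ : ∀ j, ContDiff 𝕜 (⊤ : ℕ∞) (ψ j))
    (hv : ∀ n, Summable (v n)) (hψv : ∀ n j x, ‖iteratedFDeriv 𝕜 n (ψ j) x‖ ≤ v n j)
    (n : ℕ) (x : E) (m : Fin n → E) :
    iteratedFDeriv 𝕜 n (fun y => ∑' j, ψ j y) x m = ∑' j, iteratedFDeriv 𝕜 n (ψ j) x m := by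
  rw [iteratedFDeriv_tsum_apply hψ (fun n _ => hv n) (fun n j x _ => hψv n j x) le_top]
  exact (ContinuousMultilinearMap.hasSum_eval
    (Summable.of_norm_bounded (hv n) fun j => hψv n j x).hasSum m).tsum_eq.symm

end Tsum

theorem borel_lemma_banach_general
    {X : Type*} [NormedAddCommGroup X] [NormedSpace ℝ X]
    (H : X → X) (hH : ContDiff ℝ (⊤ : ℕ∞) H)
    (hHid : ∀ᶠ x in nhds (0 : X), H x = x)
    (hHder : ∀ n : ℕ, ∃ C : ℝ, ∀ x, ‖iteratedFDeriv ℝ n H x‖ ≤ C)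
    {Y : Type*} [NormedAddCommGroup Y] [NormedSpace ℝ Y] [CompleteSpace Y]
    (g : ∀ j : ℕ, ContinuousMultilinearMap ℝ (fun _ : Fin j => X) Y)
    (P : ℕ → X → Y) (hP : ∀ j x, P j x = g j (fun _ => x)) :
    ∃ f : X → Y, ContDiff ℝ (⊤ : ℕ∞) f ∧
      (∀ n : ℕ, ∃ C : ℝ, ∀ x, ‖iteratedFDeriv ℝ n f x‖ ≤ C) ∧
      ∀ (j : ℕ) (x : X), iteratedFDeriv ℝ j f 0 (fun _ => x) = P j x := by
  obtain ⟨A, hA_mono, hA_one, hA⟩ := exists_monotone_bound hHder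
  set G : ∀ j, X [×j]→L[ℝ] Y := fun j => (j ! : ℝ)⁻¹ • g j
  obtain ⟨t, ht_pos, ht_one, htA, htail⟩ :=
    exists_borel_scales hA_mono hA_one (c := fun j => j ! * ‖G j‖) fun j => by positivity
  set ψ : ℕ → X → Y := fun j x => G j fun _ => rescale (t j) H x
  have hψ : ∀ j, ContDiff ℝ (⊤ : ℕ∞) (ψ j) := fun j =>
    (G j).contDiff_comp_diagonal.comp (hH.rescale (t j))
  have hψ_le : ∀ n j x, ‖iteratedFDeriv ℝ n (ψ j) x‖
      ≤ n ! * (j ! * ‖G j‖ * (t j * A 0) ^ (j - n)) * (A n / t j) ^ n := fun n j x =>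
    (G j).norm_iteratedFDeriv_comp_diagonal_comp_rescale_le (hH.of_le (by exact_mod_cast le_top))
      (by simpa using hA 0 0 le_rfl) (hA_one n) (fun m _ hmn => hA n m hmn) (ht_pos j)
      (ht_one j) (htA j) x
  choose v hv hψv using fun n => exists_summable_bound summable_geometric_two
    (fun j => ⟨_, hψ_le n j⟩) (eventually_atTop.2 ⟨2 * n + 1, fun j hj x =>
      (hψ_le n j x).trans (htail n j (by omega))⟩)
  refine ⟨fun x => ∑' j, ψ j x, contDiff_tsum hψ (fun n _ => hv n) fun n j x _ => hψv n j x,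
    fun n => ⟨∑' j, v n j, norm_iteratedFDeriv_tsum_le hψ hv hψv n⟩, fun j x => ?_⟩
  have hψ_zero : ∀ i k y, iteratedFDeriv ℝ k (ψ i) 0 (fun _ => y) =
      if k = i then i ! • G i (fun _ => y) else 0 := fun i =>
    (G i).iteratedFDeriv_comp_diagonal_comp_zero_apply (rescale_eventuallyEq_id hHid (ht_pos i).ne')
  rw [iteratedFDeriv_tsum_apply_apply hψ hv hψv,
    tsum_eq_single j fun i hi => by rw [hψ_zero, if_neg hi.symm], hψ_zero, if_pos rfl, hP,
    smul_apply, ← Nat.cast_smul_eq_nsmul ℝ, smul_inv_smul₀ (Nat.cast_ne_zero.2 j.factorial_ne_zero)]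

/-- **Borel lemma for Banach spaces.**  If a real Banach space `X` possesses a `C^∞` K-map
with all iterated Fréchet derivatives bounded, then for every Banach space `Y` and every
sequence `(P_j)` of continuous homogeneous polynomial maps (with `P_j` of degree `j`, given
by continuous symmetric `j`-linear maps `g j`) there is a `C^∞` map `f : X → Y` with all
iterated Fréchet derivatives bounded such that `D^j f(0) (x, ..., x) = P_j x` for all `j`
and `x`. -/
theorem borel_lemma_banach
    {X : Type*} [NormedAddCommGroup X] [NormedSpace ℝ X] [CompleteSpace X]
    (H : X → X) (hH : ContDiff ℝ (⊤ : ℕ∞) H)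
    (hHid : ∀ᶠ x in nhds (0 : X), H x = x)
    (hHbdd : ∃ C : ℝ, ∀ x, ‖H x‖ ≤ C)
    (hHder : ∀ n : ℕ, ∃ C : ℝ, ∀ x, ‖iteratedFDeriv ℝ n H x‖ ≤ C)
    {Y : Type*} [NormedAddCommGroup Y] [NormedSpace ℝ Y] [CompleteSpace Y]
    (g : ∀ j : ℕ, ContinuousMultilinearMap ℝ (fun _ : Fin j => X) Y)
    (hsym : ∀ (j : ℕ) (v : Fin j → X) (σ : Equiv.Perm (Fin j)), g j (v ∘ σ) = g j v)
    (P : ℕ → X → Y) (hP : ∀ j x, P j x = g j (fun _ => x)) :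
    ∃ f : X → Y, ContDiff ℝ (⊤ : ℕ∞) f ∧
      (∀ n : ℕ, ∃ C : ℝ, ∀ x, ‖iteratedFDeriv ℝ n f x‖ ≤ C) ∧
      ∀ (j : ℕ) (x : X), iteratedFDeriv ℝ j f 0 (fun _ => x) = P j x :=
  borel_lemma_banach_general H hH hHid hHder g P hP
end

section
/- Let X be a real Banach space and H a C^q K-map on X which coincides with the identity on the open ball {‖x‖ < ρ} and satisfies ‖H(x)‖ ≤ N for all x. Let z ∈ X, r > 0, and let Y be a Banach space. Then for every R > N·r/ρ and every C^q map f defined on the open ball of radius R around z with values in Y, there exists a C^q map F : X → Y defined on all of X that coincides with f on a neighborhood of the closed ball B̄(z, r). -/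
open Metric Filter

/-!
Rescale the K-map about `z`: for `c > 0`, `G x = z + c • H (c⁻¹ • (x - z))` is `C^q`, is the
identity on `ball z (c * ρ)` and takes values in `closedBall z (c * N)`. Choosing `c = r' / ρ`
with `r < r'` and `N * r' / ρ < R` (possible since the inequality `N * r / ρ < R` is strict),
`f ∘ G` is `C^q` on all of `X` and equals `f` on the open neighbourhood `ball z r'` of
`closedBall z r`.
-/

section ConjHomothety

variable {X : Type*} [NormedAddCommGroup X] [NormedSpace ℝ X]

noncomputable def conjHomothety (H : X → X) (z : X) (c : ℝ) (x : X) : X :=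
  z + c • H (c⁻¹ • (x - z))

variable {H : X → X} {z : X} {c : ℝ}

theorem contDiff_conjHomothety {q : ℕ∞} (hH : ContDiff ℝ q H) :
    ContDiff ℝ q (conjHomothety H z c) :=
  contDiff_const.add <| contDiff_const.smul <|
    hH.comp <| contDiff_const.smul <| contDiff_id.sub contDiff_const

theorem conjHomothety_eq_self {ρ : ℝ} (hc : 0 < c) (hHid : ∀ x : X, ‖x‖ < ρ → H x = x)
    {x : X} (hx : x ∈ ball z (c * ρ)) : conjHomothety H z c x = x := by
  have hnorm : ‖c⁻¹ • (x - z)‖ < ρ := by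
    rw [norm_smul, Real.norm_of_nonneg (inv_nonneg.mpr hc.le), inv_mul_lt_iff₀ hc,
      ← dist_eq_norm]
    exact hx
  rw [conjHomothety, hHid _ hnorm, smul_inv_smul₀ hc.ne', add_sub_cancel]

theorem conjHomothety_mem_closedBall {N : ℝ} (hc : 0 ≤ c) (hHbdd : ∀ x : X, ‖H x‖ ≤ N)
    (x : X) : conjHomothety H z c x ∈ closedBall z (c * N) := by
  rw [mem_closedBall, dist_eq_norm, conjHomothety, add_sub_cancel_left, norm_smul,
    Real.norm_of_nonneg hc]
  exact mul_le_mul_of_nonneg_left (hHbdd _) hc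

end ConjHomothety

theorem extension_from_ball_general
    {X : Type*} [NormedAddCommGroup X] [NormedSpace ℝ X]
    (q : ℕ∞) (H : X → X) (ρ N : ℝ) (hρ : 0 < ρ)
    (hH : ContDiff ℝ q H)
    (hHid : ∀ x : X, ‖x‖ < ρ → H x = x)
    (hHbdd : ∀ x : X, ‖H x‖ ≤ N)
    (z : X) (r : ℝ) (hr : 0 < r)
    {Y : Type*} [NormedAddCommGroup Y] [NormedSpace ℝ Y]
    (R : ℝ) (hR : N * r / ρ < R)
    (f : X → Y) (hf : ContDiffOn ℝ q f (ball z R)) :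
    ∃ F : X → Y, ContDiff ℝ q F ∧
      ∀ᶠ x in nhdsSet (closedBall z r), F x = f x := by
  obtain ⟨r', hrr', hr'R⟩ : ∃ r' > r, N * r' / ρ < R :=
    (((continuous_const.mul continuous_id).div_const ρ).tendsto r).eventually
      (gt_mem_nhds hR) |>.exists_gt
  have hc : 0 < r' / ρ := div_pos (hr.trans hrr') hρ
  have hmaps (x : X) : conjHomothety H z (r' / ρ) x ∈ ball z R :=
    closedBall_subset_ball (by rwa [div_mul_eq_mul_div, mul_comm])
      (conjHomothety_mem_closedBall hc.le hHbdd x)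
  refine ⟨f ∘ conjHomothety H z (r' / ρ),
    hf.comp_contDiff (contDiff_conjHomothety hH) hmaps, ?_⟩
  filter_upwards [isOpen_ball.mem_nhdsSet.mpr (closedBall_subset_ball hrr')] with x hx
  rw [Function.comp_apply, conjHomothety_eq_self hc hHid (by rwa [div_mul_cancel₀ _ hρ.ne'])]

/-- Let `H` be a `C^q` K-map on `X` equal to the identity on the open ball of radius `ρ`
about `0` and with `‖H x‖ ≤ N` for all `x`.  Then for every `z ∈ X`, `r > 0`, every
`R > N * r / ρ` and every `C^q` map `f` on the open ball of radius `R` around `z` with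
values in a Banach space `Y`, there is a `C^q` map `F : X → Y` coinciding with `f` on a
neighborhood of the closed ball `B̄(z, r)`. -/
theorem extension_from_ball
    {X : Type*} [NormedAddCommGroup X] [NormedSpace ℝ X] [CompleteSpace X]
    (q : ℕ∞) (H : X → X) (ρ N : ℝ) (hρ : 0 < ρ)
    (hH : ContDiff ℝ q H)
    (hHid : ∀ x : X, ‖x‖ < ρ → H x = x)
    (hHbdd : ∀ x : X, ‖H x‖ ≤ N)
    (z : X) (r : ℝ) (hr : 0 < r)
    {Y : Type*} [NormedAddCommGroup Y] [NormedSpace ℝ Y] [CompleteSpace Y]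
    (R : ℝ) (hR : N * r / ρ < R)
    (f : X → Y) (hf : ContDiffOn ℝ q f (ball z R)) :
    ∃ F : X → Y, ContDiff ℝ q F ∧
      ∀ᶠ x in nhdsSet (closedBall z r), F x = f x :=
  extension_from_ball_general q H ρ N hρ hH hHid hHbdd z r hr R hR f hf
end
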